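/- The group of all permutations f of G such that for every S ∈ {{e}, Z \ {e}} ∪ {Y_i : i ∈ F_q} and all g, h ∈ G one has hg⁻¹ ∈ S if and only if f(h)f(g)⁻¹ ∈ S, is exactly the group {x ↦ σ(x)·c : σ ∈ K, c ∈ G}; in particular this group is the semidirect product of the group of right translations of G by K and has order q³(q² − 1). -/

import Mathlib

/-- The Heisenberg group `H₃(F)` of upper unitriangular 3×3 matrices over `F`,
recorded by the three free entries: `x` in position (1,2), `y` in position (2,3),
`z` in position (1,3). -/
@[ext]
structure Heis (F : Type*) where
  x : F
  y : F
  z : F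
deriving DecidableEq

namespace Heis

variable {F : Type*} [Field F]

/-- Multiplication corresponding to the matrix product. -/
instance : Group (Heis F) where
  mul a b := ⟨a.x + b.x, a.y + b.y, a.z + b.z + a.x * b.y⟩
  one := ⟨0, 0, 0⟩
  inv a := ⟨-a.x, -a.y, -a.z + a.x * a.y⟩
  mul_assoc a b c := Heis.ext
    (show a.x + b.x + c.x = a.x + (b.x + c.x) by ring)
    (show a.y + b.y + c.y = a.y + (b.y + c.y) by ring)
    (show a.z + b.z + a.x * b.y + c.z + (a.x + b.x) * c.y
        = a.z + (b.z + c.z + b.x * c.y) + a.x * (b.y + c.y) by ring)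
  one_mul a := Heis.ext
    (show (0 : F) + a.x = a.x by ring)
    (show (0 : F) + a.y = a.y by ring)
    (show (0 : F) + a.z + 0 * a.y = a.z by ring)
  mul_one a := Heis.ext
    (show a.x + 0 = a.x by ring)
    (show a.y + 0 = a.y by ring)
    (show a.z + 0 + a.x * 0 = a.z by ring)
  inv_mul_cancel a := Heis.ext
    (show -a.x + a.x = 0 by ring)
    (show -a.y + a.y = 0 by ring)
    (show -a.z + a.x * a.y + a.z + -a.x * a.y = 0 by ring)

instance [Fintype F] : Fintype (Heis F) :=
  Fintype.ofEquiv (F × F × F)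
    ⟨fun p => ⟨p.1, p.2.1, p.2.2⟩, fun a => (a.x, a.y, a.z), fun _ => rfl, fun _ => rfl⟩

end Heis

/-- The element `g(x,y,z)` of the Heisenberg group. -/
def gElt {F : Type*} (x y z : F) : Heis F := ⟨x, y, z⟩

/-- The center `Z = {g(0,0,z) : z ∈ F}` of the Heisenberg group, as a set. -/
def Zset (F : Type*) [Field F] : Set (Heis F) := {g : Heis F | g.x = 0 ∧ g.y = 0}

/-- The center `Z` as a subgroup of the Heisenberg group. -/
def Zsub (F : Type*) [Field F] : Subgroup (Heis F) where
  carrier := Zset F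
  mul_mem' := fun {a b} ha hb =>
    ⟨show a.x + b.x = 0 by rw [ha.1, hb.1, add_zero],
     show a.y + b.y = 0 by rw [ha.2, hb.2, add_zero]⟩
  one_mem' := ⟨rfl, rfl⟩
  inv_mem' := fun {a} ha =>
    ⟨show -a.x = 0 by rw [ha.1, neg_zero],
     show -a.y = 0 by rw [ha.2, neg_zero]⟩

/-- `γ_i(α,β) = αβ/2 + (α² − εβ²)i`. -/
def gam {F : Type*} [Field F] (ε i α β : F) : F := α * β / 2 + (α ^ 2 - ε * β ^ 2) * i

/-- `Y_i = {g(α, β, γ_i(α,β)) : (α,β) ≠ (0,0)}`. -/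
def Yset {F : Type*} [Field F] (ε i : F) : Set (Heis F) :=
  {g : Heis F | ∃ α β : F, (α, β) ≠ (0, 0) ∧ g = gElt α β (gam ε i α β)}

/-- `X_i = Y_i ∪ {e}`. -/
def Xset {F : Type*} [Field F] (ε i : F) : Set (Heis F) := Yset ε i ∪ {1}

/-- The map `ρ(M) : G → G` attached to the matrix `M = [[α,β],[εβ,α]]`. -/
def rho {F : Type*} [Field F] (ε α β : F) : Heis F → Heis F := fun g =>
  gElt (α * g.x + ε * β * g.y) (β * g.x + α * g.y)
    (α * β * (g.x ^ 2 / 2 + ε * g.y ^ 2 / 2) + ε * β ^ 2 * g.x * g.y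
      + (α ^ 2 - ε * β ^ 2) * g.z)

/-- `K = {ρ(M) : M = [[α,β],[εβ,α]], (α,β) ≠ (0,0)}`, as a set of maps `G → G`. -/
def Kset {F : Type*} [Field F] (ε : F) : Set (Heis F → Heis F) :=
  {f | ∃ α β : F, (α, β) ≠ (0, 0) ∧ f = rho ε α β}

/-- The family of sets `{e}`, `Z \ {e}`, `Y_i` for `i ∈ F`. -/
def SFam {F : Type*} [Field F] (ε : F) : Set (Set (Heis F)) :=
  insert {1} (insert (Zset F \ {1}) {S | ∃ i : F, S = Yset ε i})

/-- `f` preserves each of the basic sets `{e}`, `Z \ {e}`, `Y_i`: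
`hg⁻¹ ∈ S ↔ f(h)f(g)⁻¹ ∈ S`. -/
def Preserves {F : Type*} [Field F] (ε : F) (f : Heis F → Heis F) : Prop :=
  ∀ S ∈ SFam ε, ∀ g h : Heis F, h * g⁻¹ ∈ S ↔ f h * (f g)⁻¹ ∈ S

/-- The set of permutations of `G` of the form `x ↦ σ(x)·c` with `σ ∈ K`, `c ∈ G`. -/
def Aset {F : Type*} [Field F] (ε : F) : Set (Equiv.Perm (Heis F)) :=
  {f | ∃ σ ∈ Kset ε, ∃ c : Heis F, ∀ x : Heis F, f x = σ x * c}

/-- The operation `ψ` on `F ∪ {∞}`, with `∞` encoded as `none`. -/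
def psi {F : Type*} [Field F] [DecidableEq F] (ε : F) : Option F → Option F → Option F
  | none, j => j
  | some i, none => some i
  | some i, some j => if i + j = 0 then none else some ((i * j + ε / 16) / (i + j))

/-- `Y_k` for `k ∈ F ∪ {∞}`, where `Y_∞ = Z \ {e}`. -/
def YInf {F : Type*} [Field F] (ε : F) : Option F → Set (Heis F)
  | some i => Yset ε i
  | none => Zset F \ {1}

/-!
Write `m(g) = z - xy/2` and `N(g) = x² - εy²`. As `ε` is a nonsquare, `N` vanishes exactly on
`Z`, and `Y_i` is the set of non-central `g` with `m(g) = i·N(g)`. Each `ρ(M)` is an automorphism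
multiplying both `m` and `N` by `det M`, so it preserves every basic set, and right translations
preserve every relation `hg⁻¹ ∈ S`.

Conversely, `t = f·f(e)⁻¹` fixes `e`, preserves `Z`-cosets and preserves `m/N` on quotients
`t(h)t(g)⁻¹`. Comparing `h` with central elements `g(0,0,s)` shows that `t` multiplies `m` and `N`
by one constant `λ` and that `t(h·g(0,0,s)) = t(h)·g(0,0,λs)`; comparing `g` with `h·g(0,0,s)` for
two values of `s` then shows that `t` multiplies `N(hg⁻¹)` and the symplectic form
`g.x h.y − g.y h.x` by `λ`. Pairing `t(h)` with `t(g(1,0,0)) = g(a,c,·)` under these two forms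
determines its plane coordinates, and `m` its last one: `t = ρ(a,c)`. Counting the pairs
`(ρ(M), c)` gives `q³(q² − 1)`.
-/

namespace Heis

lemma card_eq {F : Type*} : Nat.card (Heis F) = Nat.card F ^ 3 := by
  rw [← Nat.card_congr (⟨fun p => ⟨p.1, p.2.1, p.2.2⟩, fun a => (a.x, a.y, a.z),
    fun _ => rfl, fun _ => rfl⟩ : F × F × F ≃ Heis F), Nat.card_prod, Nat.card_prod]
  ring

variable {F : Type*} [Field F]

@[simp] lemma mul_x (a b : Heis F) : (a * b).x = a.x + b.x := rfl
@[simp] lemma mul_y (a b : Heis F) : (a * b).y = a.y + b.y := rfl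
@[simp] lemma mul_z (a b : Heis F) : (a * b).z = a.z + b.z + a.x * b.y := rfl
@[simp] lemma inv_x (a : Heis F) : a⁻¹.x = -a.x := rfl
@[simp] lemma inv_y (a : Heis F) : a⁻¹.y = -a.y := rfl
@[simp] lemma inv_z (a : Heis F) : a⁻¹.z = -a.z + a.x * a.y := rfl
@[simp] lemma one_x : (1 : Heis F).x = 0 := rfl
@[simp] lemma one_y : (1 : Heis F).y = 0 := rfl
@[simp] lemma one_z : (1 : Heis F).z = 0 := rfl

def moment (d : Heis F) : F := d.z - d.x * d.y / 2

def planeNorm (ε : F) (d : Heis F) : F := d.x ^ 2 - ε * d.y ^ 2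

lemma moment_mul_inv (h2 : (2 : F) ≠ 0) (g h : Heis F) :
    moment (h * g⁻¹) = moment h - moment g + (g.x * h.y - g.y * h.x) / 2 := by
  simp only [moment, mul_x, mul_y, mul_z, inv_x, inv_y, inv_z]
  field_simp
  ring

lemma ext_of_moment {a b : Heis F} (hx : a.x = b.x) (hy : a.y = b.y)
    (hm : moment a = moment b) : a = b := by
  refine Heis.ext hx hy ?_
  simp only [moment, hx, hy] at hm
  exact sub_left_injective hm

end Heis

open Heis

@[simp] lemma gElt_x {F : Type*} (x y z : F) : (gElt x y z).x = x := rfl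
@[simp] lemma gElt_y {F : Type*} (x y z : F) : (gElt x y z).y = y := rfl
@[simp] lemma gElt_z {F : Type*} (x y z : F) : (gElt x y z).z = z := rfl

section Setup

variable {F : Type*} [Field F]

lemma sq_sub_mul_sq_eq_zero_iff {ε : F} (hε : ¬IsSquare ε) {a b : F} :
    a ^ 2 - ε * b ^ 2 = 0 ↔ a = 0 ∧ b = 0 := by
  refine ⟨fun h => ?_, fun ⟨ha, hb⟩ => by simp [ha, hb]⟩
  by_cases hb : b = 0
  · simp_all
  · exact absurd ⟨a / b, by field_simp; linear_combination -h⟩ hε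

lemma mem_Zset_iff_planeNorm_eq_zero {ε : F} (hε : ¬IsSquare ε) {d : Heis F} :
    d ∈ Zset F ↔ planeNorm ε d = 0 :=
  (sq_sub_mul_sq_eq_zero_iff hε).symm

lemma eq_gElt_of_mem_Zset {d : Heis F} (hd : d ∈ Zset F) : d = gElt 0 0 d.z :=
  Heis.ext hd.1 hd.2 rfl

lemma eq_one_iff_mem_Zset_and_moment_eq_zero {d : Heis F} :
    d = 1 ↔ d ∈ Zset F ∧ moment d = 0 := by
  constructor
  · rintro rfl
    simp [Zset, moment]
  · rintro ⟨⟨hx, hy⟩, hm⟩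
    exact Heis.ext hx hy (by simpa [moment, hx] using hm)

lemma mem_Yset_iff {ε i : F} {d : Heis F} :
    d ∈ Yset ε i ↔ d ∉ Zset F ∧ moment d = i * planeNorm ε d := by
  constructor
  · rintro ⟨α, β, hne, rfl⟩
    refine ⟨fun h => hne (Prod.ext h.1 h.2), ?_⟩
    simp only [moment, planeNorm, gElt_x, gElt_y, gElt_z, gam]
    ring
  · rintro ⟨hd, hm⟩
    refine ⟨d.x, d.y, fun h => hd ⟨congrArg Prod.fst h, congrArg Prod.snd h⟩, ?_⟩
    refine Heis.ext rfl rfl ?_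
    simp only [moment, planeNorm] at hm
    simp only [gElt_z, gam]
    linear_combination hm

lemma moment_mul_inv_of_mem_Zset {c : Heis F} (hc : c ∈ Zset F) (h : Heis F) :
    moment (h * c⁻¹) = moment h - c.z := by
  simp only [moment, mul_x, mul_y, mul_z, inv_x, inv_y, inv_z, hc.1, hc.2]
  ring

lemma moment_mul_central (h : Heis F) (s : F) : moment (h * gElt 0 0 s) = moment h + s := by
  simp only [moment, mul_x, mul_y, mul_z, gElt_x, gElt_y, gElt_z]
  ring

lemma mul_inv_mem_Zset_iff {g h : Heis F} : h * g⁻¹ ∈ Zset F ↔ h.x = g.x ∧ h.y = g.y := by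
  simp only [Zset, Set.mem_ofPred_eq, mul_x, mul_y, inv_x, inv_y, ← sub_eq_add_neg, sub_eq_zero]

lemma planeNorm_mul_inv_of_mem_Zset {ε : F} {c : Heis F} (hc : c ∈ Zset F) (h : Heis F) :
    planeNorm ε (h * c⁻¹) = planeNorm ε h := by
  simp [planeNorm, hc.1, hc.2]

lemma map_mem_SFam_iff {ε : F} (hε : ¬IsSquare ε) {φ : Heis F → Heis F} {c : F} (hc : c ≠ 0)
    (hm : ∀ d, moment (φ d) = c * moment d) (hn : ∀ d, planeNorm ε (φ d) = c * planeNorm ε d)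
    {S : Set (Heis F)} (hS : S ∈ SFam ε) (d : Heis F) : φ d ∈ S ↔ d ∈ S := by
  have hZ : ∀ d, φ d ∈ Zset F ↔ d ∈ Zset F := fun d => by
    rw [mem_Zset_iff_planeNorm_eq_zero hε, mem_Zset_iff_planeNorm_eq_zero hε, hn,
      mul_eq_zero, or_iff_right hc]
  have h1 : φ d = 1 ↔ d = 1 := by
    rw [eq_one_iff_mem_Zset_and_moment_eq_zero, eq_one_iff_mem_Zset_and_moment_eq_zero, hZ, hm,
      mul_eq_zero, or_iff_right hc]
  rcases hS with rfl | rfl | ⟨i, rfl⟩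
  · exact h1
  · exact and_congr (hZ d) (not_congr h1)
  · rw [mem_Yset_iff, mem_Yset_iff, hZ, hm, hn, mul_left_comm, mul_right_inj' hc]

lemma singleton_one_mem_SFam (ε : F) : ({1} : Set (Heis F)) ∈ SFam ε :=
  Set.mem_insert _ _

lemma Zset_diff_one_mem_SFam (ε : F) : Zset F \ {1} ∈ SFam ε :=
  Set.mem_insert_of_mem _ (Set.mem_insert _ _)

lemma Yset_mem_SFam (ε i : F) : Yset ε i ∈ SFam ε :=
  Set.mem_insert_of_mem _ (Set.mem_insert_of_mem _ ⟨i, rfl⟩)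

end Setup

section Rho

variable {F : Type*} [Field F]

lemma rho_mul (h2 : (2 : F) ≠ 0) (ε α β : F) (a b : Heis F) :
    rho ε α β (a * b) = rho ε α β a * rho ε α β b := by
  refine Heis.ext ?_ ?_ ?_
  · simp only [rho, mul_x, mul_y, gElt_x]; ring
  · simp only [rho, mul_x, mul_y, gElt_y]; ring
  · simp only [rho, mul_x, mul_y, mul_z, gElt_x, gElt_y, gElt_z]
    field_simp
    ring

@[simp] lemma rho_one (ε α β : F) : rho ε α β 1 = 1 :=
  Heis.ext (by simp [rho]) (by simp [rho]) (by simp [rho])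

def rhoHom (h2 : (2 : F) ≠ 0) (ε α β : F) : Heis F →* Heis F where
  toFun := rho ε α β
  map_one' := rho_one ε α β
  map_mul' := rho_mul h2 ε α β

lemma moment_rho (h2 : (2 : F) ≠ 0) (ε α β : F) (d : Heis F) :
    moment (rho ε α β d) = (α ^ 2 - ε * β ^ 2) * moment d := by
  simp only [moment, rho, gElt_x, gElt_y, gElt_z]
  field_simp
  ring

lemma planeNorm_rho (ε α β : F) (d : Heis F) :
    planeNorm ε (rho ε α β d) = (α ^ 2 - ε * β ^ 2) * planeNorm ε d := by
  simp only [planeNorm, rho, gElt_x, gElt_y]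
  ring

lemma rho_mem_SFam_iff {ε : F} (hε : ¬IsSquare ε) (h2 : (2 : F) ≠ 0) {α β : F}
    (hαβ : (α, β) ≠ (0, 0)) {S : Set (Heis F)} (hS : S ∈ SFam ε) (d : Heis F) :
    rho ε α β d ∈ S ↔ d ∈ S :=
  map_mem_SFam_iff hε (fun h => hαβ (by simp_all [sq_sub_mul_sq_eq_zero_iff hε]))
    (moment_rho h2 ε α β) (planeNorm_rho ε α β) hS d

lemma rho_injective {ε : F} (hε : ¬IsSquare ε) (h2 : (2 : F) ≠ 0) {α β : F}
    (hαβ : (α, β) ≠ (0, 0)) : Function.Injective (rho ε α β) :=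
  (injective_iff_map_eq_one (rhoHom h2 ε α β)).mpr fun d hd =>
    (rho_mem_SFam_iff hε h2 hαβ (singleton_one_mem_SFam ε) d).mp hd

end Rho

section Preserves

variable {F : Type*} [Field F] {ε : F}

lemma Preserves.mul_right {f : Heis F → Heis F} (hf : Preserves ε f) (c : Heis F) :
    Preserves ε (fun x => f x * c) := by
  intro S hS g h
  rw [mul_inv_rev, mul_assoc, mul_inv_cancel_left]
  exact hf S hS g h

lemma preserves_rho (hε : ¬IsSquare ε) (h2 : (2 : F) ≠ 0) {α β : F} (hαβ : (α, β) ≠ (0, 0)) :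
    Preserves ε (rho ε α β) := by
  intro S hS g h
  have hrho : rho ε α β h * (rho ε α β g)⁻¹ = rho ε α β (h * g⁻¹) :=
    ((rhoHom h2 ε α β).map_mul_inv h g).symm
  rw [hrho, rho_mem_SFam_iff hε h2 hαβ hS]

end Preserves

section Converse

variable {F : Type*} [Field F] {ε : F} {t : Heis F → Heis F}

def multiplier (ε : F) (t : Heis F → Heis F) : F := planeNorm ε (t (gElt 1 0 0))

lemma Preserves.map_mul_inv_mem_Zset_iff (ht : Preserves ε t) (g h : Heis F) :
    t h * (t g)⁻¹ ∈ Zset F ↔ h * g⁻¹ ∈ Zset F := by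
  have h1 := ht _ (singleton_one_mem_SFam ε) g h
  have hZ := ht _ (Zset_diff_one_mem_SFam ε) g h
  simp only [Set.mem_sdiff, Set.mem_singleton_iff] at h1 hZ
  by_cases hgh : h * g⁻¹ = 1
  · rw [hgh, ← h1.mp hgh]
  · exact ⟨fun hm => (hZ.mpr ⟨hm, mt h1.mpr hgh⟩).1, fun hm => (hZ.mp ⟨hm, hgh⟩).1⟩

/-- `moment / planeNorm` is preserved on quotients, cross-multiplied so that it also holds
(as `0 = 0`) on the center. -/
lemma Preserves.moment_mul_planeNorm (hε : ¬IsSquare ε) (ht : Preserves ε t) (g h : Heis F) :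
    moment (t h * (t g)⁻¹) * planeNorm ε (h * g⁻¹)
      = moment (h * g⁻¹) * planeNorm ε (t h * (t g)⁻¹) := by
  by_cases hZ : h * g⁻¹ ∈ Zset F
  · have hZ' := (ht.map_mul_inv_mem_Zset_iff g h).mpr hZ
    rw [(mem_Zset_iff_planeNorm_eq_zero hε).mp hZ, (mem_Zset_iff_planeNorm_eq_zero hε).mp hZ',
      mul_zero, mul_zero]
  · have hN : planeNorm ε (h * g⁻¹) ≠ 0 := mt (mem_Zset_iff_planeNorm_eq_zero hε).mpr hZ
    have hY : h * g⁻¹ ∈ Yset ε (moment (h * g⁻¹) / planeNorm ε (h * g⁻¹)) :=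
      mem_Yset_iff.mpr ⟨hZ, (div_mul_cancel₀ _ hN).symm⟩
    rw [(mem_Yset_iff.mp ((ht _ (Yset_mem_SFam ε _) g h).mp hY)).2]
    field_simp

lemma Preserves.map_mem_Zset (ht : Preserves ε t) (ht1 : t 1 = 1) {d : Heis F}
    (hd : d ∈ Zset F) : t d ∈ Zset F := by
  simpa [ht1] using (ht.map_mul_inv_mem_Zset_iff 1 d).mpr (by simpa using hd)

lemma Preserves.map_notMem_Zset (ht : Preserves ε t) (ht1 : t 1 = 1) {d : Heis F}
    (hd : d ∉ Zset F) : t d ∉ Zset F := by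
  simpa [ht1] using mt (ht.map_mul_inv_mem_Zset_iff 1 d).mp (by simpa using hd)

lemma Preserves.z_map_central_mul_planeNorm (hε : ¬IsSquare ε)
    (ht : Preserves ε t) (ht1 : t 1 = 1) (h : Heis F) (s : F) :
    (t (gElt 0 0 s)).z * planeNorm ε h = s * planeNorm ε (t h) := by
  have key : ∀ s : F, (moment (t h) - (t (gElt 0 0 s)).z) * planeNorm ε h
      = (moment h - s) * planeNorm ε (t h) := fun s => by
    have hs : gElt 0 0 s ∈ Zset F := ⟨rfl, rfl⟩
    have hts := ht.map_mem_Zset ht1 hs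
    simpa only [moment_mul_inv_of_mem_Zset hs, moment_mul_inv_of_mem_Zset hts,
      planeNorm_mul_inv_of_mem_Zset hs, planeNorm_mul_inv_of_mem_Zset hts, gElt_z]
      using ht.moment_mul_planeNorm hε (gElt 0 0 s) h
  have key0 := key 0
  rw [show gElt (0 : F) 0 0 = 1 from rfl, ht1, one_z] at key0
  linear_combination key0 - key s

lemma Preserves.map_central (hε : ¬IsSquare ε) (ht : Preserves ε t)
    (ht1 : t 1 = 1) (s : F) : t (gElt 0 0 s) = gElt 0 0 (multiplier ε t * s) := by
  rw [eq_gElt_of_mem_Zset (ht.map_mem_Zset ht1 ⟨rfl, rfl⟩)]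
  congr 1
  simpa [planeNorm, multiplier, mul_comm] using
    ht.z_map_central_mul_planeNorm hε ht1 (gElt 1 0 0) s

lemma Preserves.planeNorm_map (hε : ¬IsSquare ε) (ht : Preserves ε t)
    (ht1 : t 1 = 1) (h : Heis F) : planeNorm ε (t h) = multiplier ε t * planeNorm ε h := by
  simpa [ht.map_central hε ht1] using (ht.z_map_central_mul_planeNorm hε ht1 h 1).symm

lemma Preserves.moment_map (hε : ¬IsSquare ε) (ht : Preserves ε t)
    (ht1 : t 1 = 1) (h : Heis F) : moment (t h) = multiplier ε t * moment h := by
  by_cases hZ : h ∈ Zset F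
  · rw [eq_gElt_of_mem_Zset hZ, ht.map_central hε ht1]
    simp [moment]
  · have hN : planeNorm ε h ≠ 0 := mt (mem_Zset_iff_planeNorm_eq_zero hε).mpr hZ
    have key := ht.moment_mul_planeNorm hε 1 h
    simp only [ht1, inv_one, mul_one, ht.planeNorm_map hε ht1] at key
    exact mul_right_cancel₀ hN (by linear_combination key)

lemma Preserves.map_mul_central (hε : ¬IsSquare ε) (ht : Preserves ε t) (ht1 : t 1 = 1)
    (h : Heis F) (s : F) : t (h * gElt 0 0 s) = t h * gElt 0 0 (multiplier ε t * s) := by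
  have hZ : t (h * gElt 0 0 s) * (t h)⁻¹ ∈ Zset F :=
    (ht.map_mul_inv_mem_Zset_iff h _).mpr ⟨by simp, by simp⟩
  obtain ⟨hx, hy⟩ := mul_inv_mem_Zset_iff.mp hZ
  refine ext_of_moment (by simp [hx]) (by simp [hy]) ?_
  rw [moment_mul_central, ht.moment_map hε ht1, ht.moment_map hε ht1, moment_mul_central]
  ring

lemma Preserves.planeNorm_map_mul_inv (hε : ¬IsSquare ε) (ht : Preserves ε t) (ht1 : t 1 = 1)
    (g h : Heis F) :
    planeNorm ε (t h * (t g)⁻¹) = multiplier ε t * planeNorm ε (h * g⁻¹) := by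
  have key : ∀ s : F, (moment (t h * (t g)⁻¹) + multiplier ε t * s) * planeNorm ε (h * g⁻¹)
      = (moment (h * g⁻¹) + s) * planeNorm ε (t h * (t g)⁻¹) := fun s => by
    have := ht.moment_mul_planeNorm hε g (h * gElt 0 0 s)
    rw [ht.map_mul_central hε ht1] at this
    simp only [moment, planeNorm, mul_x, mul_y, mul_z, inv_x, inv_y, inv_z, gElt_x, gElt_y,
      gElt_z] at this ⊢
    linear_combination this
  linear_combination key 0 - key 1

lemma Preserves.symplectic_map (hε : ¬IsSquare ε) (h2 : (2 : F) ≠ 0) (ht : Preserves ε t)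
    (ht1 : t 1 = 1) (g h : Heis F) :
    (t g).x * (t h).y - (t g).y * (t h).x = multiplier ε t * (g.x * h.y - g.y * h.x) := by
  by_cases hZ : h * g⁻¹ ∈ Zset F
  · have hZ' := (ht.map_mul_inv_mem_Zset_iff g h).mpr hZ
    rw [mul_inv_mem_Zset_iff] at hZ hZ'
    rw [hZ.1, hZ.2, hZ'.1, hZ'.2]
    ring
  · have hN : planeNorm ε (h * g⁻¹) ≠ 0 := mt (mem_Zset_iff_planeNorm_eq_zero hε).mpr hZ
    have key := ht.moment_mul_planeNorm hε g h
    rw [ht.planeNorm_map_mul_inv hε ht1, moment_mul_inv h2, moment_mul_inv h2,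
      ht.moment_map hε ht1, ht.moment_map hε ht1] at key
    field_simp at key
    linear_combination key

theorem Preserves.mem_Kset (hε : ¬IsSquare ε) (h2 : (2 : F) ≠ 0) (ht : Preserves ε t)
    (ht1 : t 1 = 1) : t ∈ Kset ε := by
  set a := (t (gElt 1 0 0)).x
  set c := (t (gElt 1 0 0)).y
  have hlam : multiplier ε t = a ^ 2 - ε * c ^ 2 := rfl
  have hlam0 : a ^ 2 - ε * c ^ 2 ≠ 0 :=
    mt (mem_Zset_iff_planeNorm_eq_zero hε).mpr (ht.map_notMem_Zset ht1 (by simp [Zset]))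
  refine ⟨a, c, fun hac => hlam0 ?_, funext fun h => ?_⟩
  · rw [Prod.mk.injEq] at hac
    rw [hac.1, hac.2]
    ring
  have hB := ht.planeNorm_map_mul_inv hε ht1 (gElt 1 0 0) h
  have hN := ht.planeNorm_map hε ht1 h
  have hω := ht.symplectic_map hε h2 ht1 (gElt 1 0 0) h
  simp only [hlam, planeNorm, mul_x, mul_y, inv_x, inv_y, gElt_x, gElt_y] at hB hN hω
  -- polarization of `planeNorm` against `g(1,0,0)`
  have hpol : (t h).x * a - ε * (t h).y * c = (a ^ 2 - ε * c ^ 2) * h.x :=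
    mul_left_cancel₀ h2 (by linear_combination hN - hB)
  have hx : (t h).x = a * h.x + ε * c * h.y :=
    mul_left_cancel₀ hlam0 (by linear_combination a * hpol + ε * c * hω)
  have hy : (t h).y = c * h.x + a * h.y :=
    mul_left_cancel₀ hlam0 (by linear_combination c * hpol + a * hω)
  refine ext_of_moment hx hy ?_
  rw [ht.moment_map hε ht1, moment_rho h2, hlam]

end Converse

section Final

variable {F : Type*} [Field F] {ε : F}

lemma preserves_iff_mem_Aset (hε : ¬IsSquare ε) (h2 : (2 : F) ≠ 0) (f : Equiv.Perm (Heis F)) :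
    Preserves ε f ↔ f ∈ Aset ε := by
  constructor
  · intro hf
    exact ⟨_, (hf.mul_right (f 1)⁻¹).mem_Kset hε h2 (mul_inv_cancel _), f 1,
      fun x => (inv_mul_cancel_right (f x) (f 1)).symm⟩
  · rintro ⟨σ, ⟨α, β, hαβ, rfl⟩, c, hf⟩
    rw [show ⇑f = fun x => rho ε α β x * c from funext hf]
    exact (preserves_rho hε h2 hαβ).mul_right c

lemma card_Aset [Fintype F] (hε : ¬IsSquare ε) (h2 : (2 : F) ≠ 0) :
    Nat.card (Aset ε) = Fintype.card F ^ 3 * (Fintype.card F ^ 2 - 1) := by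
  classical
  let Φ : {p : F × F // p ≠ (0, 0)} × Heis F → Equiv.Perm (Heis F) := fun pc =>
    (Equiv.ofBijective _ (rho_injective hε h2 pc.1.2).bijective_of_finite).trans
      (Equiv.mulRight pc.2)
  have hrange : Set.range Φ = Aset ε := by
    ext f
    constructor
    · rintro ⟨⟨p, c⟩, rfl⟩
      exact ⟨_, ⟨p.1.1, p.1.2, p.2, rfl⟩, c, fun x => rfl⟩
    · rintro ⟨σ, ⟨α, β, hαβ, rfl⟩, c, hf⟩
      exact ⟨⟨⟨(α, β), hαβ⟩, c⟩, Equiv.ext fun x => (hf x).symm⟩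
  have hinj : Function.Injective Φ := by
    rintro ⟨⟨⟨α, β⟩, hαβ⟩, c⟩ ⟨⟨⟨α', β'⟩, hαβ'⟩, c'⟩ h
    have hc : c = c' := by simpa [Φ] using DFunLike.congr_fun h 1
    subst hc
    have h1 : rho ε α β (gElt 1 0 0) = rho ε α' β' (gElt 1 0 0) :=
      mul_right_cancel (DFunLike.congr_fun h (gElt 1 0 0))
    have hα : α = α' := by simpa [rho] using congrArg Heis.x h1
    have hβ : β = β' := by simpa [rho] using congrArg Heis.y h1
    subst hα hβ
    rfl
  rw [← hrange, Nat.card_range_of_injective hinj, Nat.card_prod, Heis.card_eq,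
    Nat.card_eq_fintype_card, Fintype.card_subtype_compl, Fintype.card_subtype_eq,
    Fintype.card_prod, Nat.card_eq_fintype_card, mul_comm, sq]

end Final

/-- The group of all permutations `f` of `G` such that for every
`S ∈ {{e}, Z \ {e}} ∪ {Y_i : i ∈ F_q}` and all `g, h ∈ G` one has `hg⁻¹ ∈ S ↔
f(h)f(g)⁻¹ ∈ S`, is exactly the group `{x ↦ σ(x)·c : σ ∈ K, c ∈ G}`; in particular
this group is the semidirect product of the group of right translations of `G` by `K`
and has order `q³(q² − 1)`. -/
theorem statement_8 {F : Type*} [Field F] [Fintype F]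
    (hodd : Odd (Fintype.card F)) (ε : F) (hε : ¬IsSquare ε) :
    {f : Equiv.Perm (Heis F) | Preserves ε ⇑f} = Aset ε ∧
    Nat.card {f : Equiv.Perm (Heis F) | Preserves ε ⇑f}
      = Fintype.card F ^ 3 * (Fintype.card F ^ 2 - 1) := by
  have h2 : (2 : F) ≠ 0 := Ring.two_ne_zero fun hchar => by
    have := FiniteField.even_card_iff_char_two.mp hchar
    exact Nat.not_even_iff_odd.mpr hodd (Nat.even_iff.mpr this)
  have hset : {f : Equiv.Perm (Heis F) | Preserves ε ⇑f} = Aset ε :=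
    Set.ext (preserves_iff_mem_Aset hε h2)
  exact ⟨hset, hset ▸ card_Aset hε h2⟩
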